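/- For any odd positive integers w1, w2, w3, any complex numbers y1, y2, and any nonnegative integer n, the quantity w_{σ(1)}^n Σ_{k=0}^{n} (n choose k) E_{k,χ}(w_{σ(3)} y1) Σ_{a=0}^{w_{σ(1)} d − 1} (−1)^a χ(a) E_{n−k,χ}(w_{σ(2)} y2 + (w_{σ(2)}/w_{σ(1)}) a) w_{σ(3)}^{n−k} w_{σ(2)}^{k} is the same for all six permutations σ of {1,2,3}; explicitly, for example, w1^n Σ_{k=0}^{n} (n choose k) E_{k,χ}(w3 y1) Σ_{a=0}^{w1 d − 1} (−1)^a χ(a) E_{n−k,χ}(w2 y2 + (w2/w1) a) w3^{n−k} w2^{k} = w2^n Σ_{k=0}^{n} (n choose k) E_{k,χ}(w1 y1) Σ_{a=0}^{w2 d − 1} (−1)^a χ(a) E_{n−k,χ}(w3 y2 + (w3/w2) a) w1^{n−k} w3^{k}, and similarly for the other four orderings. -/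

import Mathlib

/-!
Write `F_x(t) = Σ E_n(x) tⁿ/n!` and `L(t) = Σ_{a<d} (-1)^a χ(a) e^{at}`, so that
`F_x(t) (e^{dt} + 1) = 2 e^{xt} L(t)`. For odd `u`, the `d`-periodicity of `χ` and the oddness of
`d` split the sum over `a < ud` as `Σ_{j<u} (-e^{dt})^j · L(t)`, and this geometric sum times
`e^{dt} + 1` telescopes to `1 + e^{udt}`. Hence the exponential generating function of the
quantity attached to `(u, v, s) = (w_{σ(1)}, w_{σ(2)}, w_{σ(3)})`, namely
`F_{sy₁}(uvt) · Σ_{a<ud} (-1)^a χ(a) F_{vy₂+va/u}(ust)`, times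
`(e^{duvt} + 1)(e^{dust} + 1)(e^{dvst} + 1)` equals
`4 e^{uvs(y₁+y₂)t} (1 + e^{duvst}) L(uvt) L(ust) L(vst)`, which is symmetric in `u, v, s`;
so is the multiplier, which is invertible.
-/

open Finset

/-- The formal exponential power series `e^{ct} = Σ cⁿ tⁿ/n!` in `ℂ[[t]]`. -/
noncomputable def expPS (c : ℂ) : PowerSeries ℂ :=
  PowerSeries.mk fun n => c ^ n / n.factorial

/-- `Σ_{a=0}^{d-1} (-1)^a χ(a) e^{at}` as a formal power series. -/
noncomputable def altSum (χ : ℤ → ℂ) (d : ℕ) : PowerSeries ℂ :=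
  ∑ a ∈ Finset.range d, ((-1 : ℂ) ^ a * χ (a : ℤ)) • expPS (a : ℂ)

/-- `E` is the family of generalized Euler polynomials attached to `χ` mod `d`:
`(Σ_{n≥0} E_{n,χ}(x) tⁿ/n!) · (e^{dt}+1) = 2 e^{xt} · Σ_{a=0}^{d-1} (-1)^a χ(a) e^{at}`. -/
def IsGenEuler (d : ℕ) (χ : ℤ → ℂ) (E : ℕ → ℂ → ℂ) : Prop :=
  ∀ x : ℂ, (PowerSeries.mk fun n => E n x / n.factorial) * (expPS (d : ℂ) + 1)
    = (2 : PowerSeries ℂ) * expPS x * altSum χ d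

/-- The alternating generalized power sum `T_k(n,χ) = Σ_{a=0}^{n} (-1)^a χ(a) a^k`
(with the convention `0^0 = 1`). -/
noncomputable def altPowSum (χ : ℤ → ℂ) (k n : ℕ) : ℂ :=
  ∑ a ∈ Finset.range (n + 1), (-1 : ℂ) ^ a * χ (a : ℤ) * (a : ℂ) ^ k

/-- The multinomial coefficient `(k+l+m)! / (k! l! m!)`. -/
def multinom (k l m : ℕ) : ℕ :=
  (k + l + m).factorial / (k.factorial * l.factorial * m.factorial)

open PowerSeries

section Egf

variable {K : Type*} [Field K]

noncomputable def egf (f : ℕ → K) : PowerSeries K :=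
  PowerSeries.mk fun n => f n / n.factorial

lemma coeff_egf (f : ℕ → K) (n : ℕ) : coeff n (egf f) = f n / n.factorial :=
  coeff_mk _ _

lemma egf_injective [CharZero K] : Function.Injective (egf (K := K)) := by
  intro f g h
  funext n
  have hn := congrArg (coeff n) h
  rwa [coeff_egf, coeff_egf, div_left_inj' (Nat.cast_ne_zero.mpr n.factorial_ne_zero)] at hn

lemma rescale_egf (c : K) (f : ℕ → K) : rescale c (egf f) = egf fun n => c ^ n * f n := by
  ext n
  rw [coeff_rescale, coeff_egf, coeff_egf, mul_div_assoc]

lemma egf_mul [CharZero K] (f g : ℕ → K) :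
    egf f * egf g = egf fun n => ∑ k ∈ range (n + 1), (n.choose k : K) * f k * g (n - k) := by
  ext n
  rw [coeff_mul, Nat.sum_antidiagonal_eq_sum_range_succ_mk, coeff_egf, sum_div]
  refine sum_congr rfl fun k hk => ?_
  have hkn : k ≤ n := Nat.lt_succ_iff.mp (mem_range.mp hk)
  rw [coeff_egf, coeff_egf, Nat.cast_choose K hkn]
  have := (n - k).factorial_ne_zero
  have := k.factorial_ne_zero
  have := n.factorial_ne_zero
  field_simp

lemma egf_sum {ι : Type*} (s : Finset ι) (c : ι → K) (f : ι → ℕ → K) :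
    egf (fun n => ∑ i ∈ s, c i * f i n) = ∑ i ∈ s, c i • egf (f i) := by
  ext n
  simp only [coeff_egf, map_sum, coeff_smul, sum_div, smul_eq_mul, mul_div_assoc]

end Egf

lemma expPS_eq_egf (c : ℂ) : expPS c = egf (c ^ ·) := rfl

lemma rescale_expPS (a c : ℂ) : rescale a (expPS c) = expPS (a * c) := by
  simp only [expPS_eq_egf, rescale_egf, mul_pow]

lemma expPS_mul_expPS (a b : ℂ) : expPS a * expPS b = expPS (a + b) := by
  rw [expPS_eq_egf, expPS_eq_egf, egf_mul, expPS_eq_egf]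
  congr 1
  funext n
  rw [add_pow]
  exact sum_congr rfl fun k _ => by ring

lemma expPS_zero : expPS 0 = 1 := by
  ext n
  cases n <;> simp [expPS, coeff_one]

lemma expPS_pow (c : ℂ) (m : ℕ) : expPS c ^ m = expPS (m * c) := by
  induction m with
  | zero => simp [expPS_zero]
  | succ m ih => rw [pow_succ, ih, expPS_mul_expPS]; push_cast; ring_nf

lemma expPS_add_one_ne_zero (c : ℂ) : expPS c + 1 ≠ 0 := by
  intro h
  have h0 := congrArg constantCoeff h
  rw [← coeff_zero_eq_constantCoeff_apply] at h0
  simp [expPS] at h0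

section EulerGeneratingFunctions

variable {χ : ℤ → ℂ} {d : ℕ} {E : ℕ → ℂ → ℂ}

lemma altSum_mul_eq_geom_sum_mul (hd : Odd d) (hper : Function.Periodic χ d) (u : ℕ) : altSum χ (u * d) = (∑ j ∈ range u, (-expPS (d : ℂ)) ^ j) * altSum χ d := by
  induction u with
  | zero => simp [altSum]
  | succ m ih =>
    rw [add_mul, one_mul, altSum, sum_range_add, ← altSum, ih, sum_range_succ, add_mul]
    congr 1
    rw [altSum, mul_sum]
    refine sum_congr rfl fun a _ => ?_
    have hχ : χ ((m * d + a : ℕ) : ℤ) = χ a := by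
      push_cast
      rw [add_comm]
      exact hper.nat_mul m a
    have hsign : (-1 : ℂ) ^ (m * d + a) = (-1) ^ m * (-1) ^ a := by
      rw [pow_add, mul_comm m d, pow_mul, hd.neg_one_pow]
    have hexp : expPS ((m * d + a : ℕ) : ℂ) = expPS (d : ℂ) ^ m * expPS a := by
      rw [expPS_pow, expPS_mul_expPS]
      push_cast
      ring_nf
    rw [hχ, hsign, hexp, neg_pow (expPS _)]
    simp only [smul_eq_C_mul, map_mul, map_pow, map_neg, map_one]
    ring

lemma altSum_mul_mul_expPS_add_one {u : ℕ} (hd : Odd d) (hper : Function.Periodic χ d)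
    (hu : Odd u) :
    altSum χ (u * d) * (expPS d + 1) = (1 + expPS (u * d)) * altSum χ d := by
  have geom := geom_sum_mul_neg (-expPS (d : ℂ)) u
  rw [sub_neg_eq_add, hu.neg_pow, sub_neg_eq_add, expPS_pow, add_comm 1] at geom
  rw [altSum_mul_eq_geom_sum_mul hd hper, mul_right_comm, geom]

lemma rescale_smul {R : Type*} [CommSemiring R] (a r : R) (f : PowerSeries R) :
    rescale a (r • f) = r • rescale a f := by
  ext n
  simp only [coeff_rescale, coeff_smul, smul_eq_mul]
  ring

lemma rescale_altSum (c : ℂ) (χ : ℤ → ℂ) (N : ℕ) :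
    rescale c (altSum χ N) = ∑ a ∈ range N, ((-1 : ℂ) ^ a * χ a) • expPS (c * a) := by
  simp only [altSum, map_sum, rescale_smul, rescale_expPS]

lemma IsGenEuler.rescale_mul (hE : IsGenEuler d χ E) (c x : ℂ) :
    rescale c (egf fun n => E n x) * (expPS (c * d) + 1)
      = 2 * expPS (c * x) * rescale c (altSum χ d) := by
  simpa only [egf, map_mul, map_add, map_one, map_ofNat, rescale_expPS] using
    congrArg (rescale c) (hE x)

variable (χ d E) in
noncomputable def shiftedEulerSum (u : ℕ) (v y : ℂ) (m : ℕ) : ℂ :=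
  ∑ a ∈ range (u * d), (-1 : ℂ) ^ a * χ (a : ℤ) * E m (v * y + v / u * a)

lemma rescale_egf_shiftedEulerSum_mul (hd : Odd d) (hper : Function.Periodic χ d)
    (hE : IsGenEuler d χ E) {u : ℕ} (hu : Odd u) (v s y : ℂ) :
    rescale (u * s) (egf (shiftedEulerSum χ d E u v y)) * (expPS (u * s * d) + 1)
        * (expPS (v * s * d) + 1)
      = 2 * expPS (u * v * s * y) * (1 + expPS (u * v * s * d))
        * (rescale (u * s) (altSum χ d) * rescale (v * s) (altSum χ d)) := by
  have hu0 : (u : ℂ) ≠ 0 := Nat.cast_ne_zero.mpr hu.pos.ne'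
  have hterm : ∀ a : ℕ, rescale (u * s) (egf fun m => E m (v * y + v / u * a))
      * (expPS (u * s * d) + 1)
      = 2 * expPS (u * v * s * y) * rescale (u * s) (altSum χ d) * expPS (v * s * a) := by
    intro a
    have harg : u * s * (v * y + v / u * a) = u * v * s * y + v * s * a := by
      field_simp
    rw [hE.rescale_mul, harg, ← expPS_mul_expPS]
    ring
  have hsum : rescale (u * s) (egf (shiftedEulerSum χ d E u v y)) * (expPS (u * s * d) + 1)
      = 2 * expPS (u * v * s * y) * rescale (u * s) (altSum χ d)
        * rescale (v * s) (altSum χ (u * d)) := by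
    have hegf : egf (shiftedEulerSum χ d E u v y) = ∑ a ∈ range (u * d),
        ((-1 : ℂ) ^ a * χ a) • egf (fun m => E m (v * y + v / u * a)) := egf_sum _ _ _
    rw [hegf, map_sum, sum_mul, rescale_altSum (v * s), mul_sum]
    refine sum_congr rfl fun a _ => ?_
    rw [rescale_smul, smul_mul_assoc, hterm, mul_smul_comm]
  have hgeom := congrArg (rescale (v * s)) (altSum_mul_mul_expPS_add_one hd hper hu)
  simp only [map_mul, map_add, map_one, rescale_expPS] at hgeom
  rw [hsum, mul_assoc, hgeom, show v * s * (u * d) = u * v * s * d by ring]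
  ring

lemma egf_mul_shiftedEulerSum_mul (hd : Odd d) (hper : Function.Periodic χ d)
    (hE : IsGenEuler d χ E) {u : ℕ} (hu : Odd u) (v s y₁ y₂ : ℂ) :
    rescale (u * v) (egf fun k => E k (s * y₁))
        * rescale (u * s) (egf (shiftedEulerSum χ d E u v y₂))
        * ((expPS (u * v * d) + 1) * (expPS (u * s * d) + 1) * (expPS (v * s * d) + 1))
      = 4 * expPS (u * v * s * (y₁ + y₂)) * (1 + expPS (u * v * s * d))
        * (rescale (u * v) (altSum χ d) * rescale (u * s) (altSum χ d)
          * rescale (v * s) (altSum χ d)) := by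
  have hexp : expPS (u * v * s * (y₁ + y₂))
      = expPS (u * v * (s * y₁)) * expPS (u * v * s * y₂) := by
    rw [expPS_mul_expPS]
    ring_nf
  calc _ = (rescale (u * v) (egf fun k => E k (s * y₁)) * (expPS (u * v * d) + 1))
        * (rescale (u * s) (egf (shiftedEulerSum χ d E u v y₂)) * (expPS (u * s * d) + 1)
          * (expPS (v * s * d) + 1)) := by ring
    _ = _ := by
      rw [hE.rescale_mul, rescale_egf_shiftedEulerSum_mul hd hper hE hu, hexp]
      ring

end EulerGeneratingFunctions

lemma egf_binomial_sum_eq (E F : ℕ → ℂ) (u v s : ℂ) :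
    (egf fun n => u ^ n * ∑ k ∈ range (n + 1), (n.choose k : ℂ) * E k * F (n - k)
        * s ^ (n - k) * v ^ k)
      = rescale (u * v) (egf E) * rescale (u * s) (egf F) := by
  rw [rescale_egf, rescale_egf, egf_mul]
  congr 1
  funext n
  rw [mul_sum]
  refine sum_congr rfl fun k hk => ?_
  have hkn : k ≤ n := Nat.lt_succ_iff.mp (mem_range.mp hk)
  rw [show u ^ n = u ^ k * u ^ (n - k) by rw [← pow_add, Nat.add_sub_cancel' hkn]]
  ring

lemma Fin.prod_three_comp_perm {R : Type*} [CommMonoid R] (W : Fin 3 → R)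
    (σ : Equiv.Perm (Fin 3)) : W (σ 0) * W (σ 1) * W (σ 2) = W 0 * W 1 * W 2 := by
  simpa only [Fin.prod_univ_three] using Equiv.prod_comp σ W

lemma Fin.prod_pairs_comp_perm {R M : Type*} [CommMonoid R] [CommMonoid M] (f : R → M)
    (W : Fin 3 → R) (σ : Equiv.Perm (Fin 3)) :
    f (W (σ 0) * W (σ 1)) * f (W (σ 0) * W (σ 2)) * f (W (σ 1) * W (σ 2))
      = f (W 0 * W 1) * f (W 0 * W 2) * f (W 1 * W 2) := by
  -- each pair is the complement of one index, and `σ` permutes the complements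
  have pairs : ∀ V : Fin 3 → R, ∏ i, f (∏ j ∈ univ.erase i, V j)
      = f (V 0 * V 1) * f (V 0 * V 2) * f (V 1 * V 2) := by
    intro V
    rw [Fin.prod_univ_three, show univ.erase (0 : Fin 3) = {1, 2} by decide,
      show univ.erase (1 : Fin 3) = {0, 2} by decide,
      show univ.erase (2 : Fin 3) = {0, 1} by decide,
      prod_pair (by decide), prod_pair (by decide), prod_pair (by decide)]
    ac_rfl
  have hcomp : ∀ i, ∏ j ∈ univ.erase i, W (σ j) = ∏ j ∈ univ.erase (σ i), W j := by
    intro i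
    calc ∏ j ∈ univ.erase i, W (σ j) = ∏ j ∈ (univ.erase i).map σ.toEmbedding, W j :=
          (prod_map (univ.erase i) σ.toEmbedding W).symm
      _ = _ := by rw [map_erase, map_univ_equiv]; rfl
  rw [← pairs W]
  refine (pairs fun i => W (σ i)).symm.trans ?_
  simp only [hcomp]
  exact Equiv.prod_comp σ fun i => f (∏ j ∈ univ.erase i, W j)

theorem stmt_2_general (d : ℕ) (hd : Odd d) (χ : ℤ → ℂ)
    (hper : ∀ a : ℤ, χ (a + d) = χ a)
    (E : ℕ → ℂ → ℂ) (hE : IsGenEuler d χ E)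
    (w : Fin 3 → ℕ) (hwodd : ∀ i, Odd (w i))
    (y1 y2 : ℂ) (n : ℕ) (σ : Equiv.Perm (Fin 3)) :
    ((w (σ 0) : ℂ) ^ n * ∑ k ∈ range (n + 1),
      (n.choose k : ℂ) * E k ((w (σ 2) : ℂ) * y1) *
        (∑ a ∈ range (w (σ 0) * d), (-1 : ℂ) ^ a * χ (a : ℤ) *
          E (n - k) ((w (σ 1) : ℂ) * y2 + (w (σ 1) : ℂ) / (w (σ 0) : ℂ) * (a : ℂ))) *
        (w (σ 2) : ℂ) ^ (n - k) * (w (σ 1) : ℂ) ^ k)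
    = (w 0 : ℂ) ^ n * ∑ k ∈ range (n + 1),
      (n.choose k : ℂ) * E k ((w 2 : ℂ) * y1) *
        (∑ a ∈ range (w 0 * d), (-1 : ℂ) ^ a * χ (a : ℤ) *
          E (n - k) ((w 1 : ℂ) * y2 + (w 1 : ℂ) / (w 0 : ℂ) * (a : ℂ))) *
        (w 2 : ℂ) ^ (n - k) * (w 1 : ℂ) ^ k := by
  have hσ := egf_mul_shiftedEulerSum_mul hd hper hE (hwodd (σ 0)) (w (σ 1)) (w (σ 2)) y1 y2
  have h1 := egf_mul_shiftedEulerSum_mul hd hper hE (hwodd 0) (w 1) (w 2) y1 y2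
  rw [Fin.prod_three_comp_perm (fun i => (w i : ℂ)) σ,
    Fin.prod_pairs_comp_perm (fun c => expPS (c * d) + 1) (fun i => (w i : ℂ)) σ,
    Fin.prod_pairs_comp_perm (fun c => rescale c (altSum χ d)) (fun i => (w i : ℂ)) σ,
    ← h1] at hσ
  have hgf := mul_right_cancel₀ (mul_ne_zero (mul_ne_zero (expPS_add_one_ne_zero _)
    (expPS_add_one_ne_zero _)) (expPS_add_one_ne_zero _)) hσ
  rw [← egf_binomial_sum_eq, ← egf_binomial_sum_eq] at hgf
  exact congrFun (egf_injective hgf) n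

/-- Theorem 3: the quantity
`w₁ⁿ Σ_k C(n,k) E_{k,χ}(w₃y₁) Σ_{a=0}^{w₁d-1} (-1)^a χ(a) E_{n-k,χ}(w₂y₂ + (w₂/w₁)a) w₃^{n-k} w₂^k`
is invariant under all six permutations of `(w₁, w₂, w₃)` (all odd). -/
theorem stmt_2 (d : ℕ) (hd : Odd d) (hd0 : 0 < d) (χ : ℤ → ℂ)
    (hper : ∀ a : ℤ, χ (a + d) = χ a)
    (hmul : ∀ a b : ℤ, χ (a * b) = χ a * χ b) (hone : χ 1 = 1)
    (hvan : ∀ a : ℤ, 1 < Int.gcd a d → χ a = 0)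
    (E : ℕ → ℂ → ℂ) (hE : IsGenEuler d χ E)
    (w : Fin 3 → ℕ) (hw : ∀ i, 0 < w i) (hwodd : ∀ i, Odd (w i))
    (y1 y2 : ℂ) (n : ℕ) (σ : Equiv.Perm (Fin 3)) :
    ((w (σ 0) : ℂ) ^ n * ∑ k ∈ range (n + 1),
      (n.choose k : ℂ) * E k ((w (σ 2) : ℂ) * y1) *
        (∑ a ∈ range (w (σ 0) * d), (-1 : ℂ) ^ a * χ (a : ℤ) *
          E (n - k) ((w (σ 1) : ℂ) * y2 + (w (σ 1) : ℂ) / (w (σ 0) : ℂ) * (a : ℂ))) *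
        (w (σ 2) : ℂ) ^ (n - k) * (w (σ 1) : ℂ) ^ k)
    = (w 0 : ℂ) ^ n * ∑ k ∈ range (n + 1),
      (n.choose k : ℂ) * E k ((w 2 : ℂ) * y1) *
        (∑ a ∈ range (w 0 * d), (-1 : ℂ) ^ a * χ (a : ℤ) *
          E (n - k) ((w 1 : ℂ) * y2 + (w 1 : ℂ) / (w 0 : ℂ) * (a : ℂ))) *
        (w 2 : ℂ) ^ (n - k) * (w 1 : ℂ) ^ k :=
  stmt_2_general d hd χ hper E hE w hwodd y1 y2 n σ
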